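/- Let f : R^d → R be differentiable with L-Lipschitz gradient and satisfy f(x) − f* ≤ μ ‖∇f(x)‖². Consider inexact gradient descent x_{n+1} = xₙ − η gₙ with ‖gₙ − ∇f(xₙ)‖² ≤ ε_est and η ≤ 1/(4L). Then f(x_{n+1}) − f* ≤ (1 − η/(4μ))(f(xₙ) − f*) + (3η/4) ε_est. -/

import Mathlib

open InnerProductSpace

lemma descent_lemma {E : Type*} [NormedAddCommGroup E] [InnerProductSpace ℝ E]
    [CompleteSpace E] (f : E → ℝ) (hdiff : Differentiable ℝ f) (L : ℝ) (hL : 0 ≤ L)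
    (hLip : ∀ x y, ‖gradient f x - gradient f y‖ ≤ L * ‖x - y‖) (x v : E) :
    f (x + v) ≤ f x + ⟪gradient f x, v⟫_ℝ + L / 2 * ‖v‖ ^ 2 := by
  have key : ∀ p : E, ∀ w : E, fderiv ℝ f p w = ⟪gradient f p, w⟫_ℝ := by
    intro p w
    rw [gradient]
    rw [← InnerProductSpace.toDual_apply_apply, LinearIsometryEquiv.apply_symm_apply]
  set c : ℝ := ⟪gradient f x, v⟫_ℝ with hc
  set a : ℝ := L / 2 * ‖v‖ ^ 2 with ha
  set φ : ℝ → ℝ := fun t => f (x + t • v) - t * c - a * t ^ 2 with hφ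
  have hcurve : ∀ t : ℝ, HasDerivAt (fun s : ℝ => x + s • v) v t := by
    intro t
    simpa using ((hasDerivAt_id t).smul_const v).const_add x
  have hφ' : ∀ t : ℝ, HasDerivAt φ (⟪gradient f (x + t • v), v⟫_ℝ - c - a * (2 * t)) t := by
    intro t
    have h1 : HasDerivAt (fun s : ℝ => f (x + s • v)) (⟪gradient f (x + t • v), v⟫_ℝ) t := by
      have := (hdiff (x + t • v)).hasFDerivAt.comp_hasDerivAt t (hcurve t)
      rwa [key] at this
    have h2 : HasDerivAt (fun s : ℝ => s * c) c t := hasDerivAt_mul_const c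
    have h3 : HasDerivAt (fun s : ℝ => a * s ^ 2) (a * (2 * t)) t := by
      simpa using ((hasDerivAt_pow 2 t).const_mul a)
    exact (h1.sub h2).sub h3
  have hmono : AntitoneOn φ (Set.Icc 0 1) := by
    apply antitoneOn_of_deriv_nonpos (convex_Icc 0 1)
    · have hcont : Continuous φ := by
        apply Continuous.sub
        apply Continuous.sub
        · exact hdiff.continuous.comp (by continuity)
        · continuity
        · continuity
      exact hcont.continuousOn
    · intro t ht
      exact (hφ' t).differentiableAt.differentiableWithinAt
    · intro t ht
      rw [interior_Icc] at ht
      rw [(hφ' t).deriv]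
      have hcs : ⟪gradient f (x + t • v) - gradient f x, v⟫_ℝ ≤
          ‖gradient f (x + t • v) - gradient f x‖ * ‖v‖ := real_inner_le_norm _ _
      have hlip := hLip (x + t • v) x
      have hn : ‖x + t • v - x‖ = t * ‖v‖ := by
        rw [add_sub_cancel_left, norm_smul]
        simp [abs_of_nonneg ht.1.le]
      rw [hn] at hlip
      have hinner : ⟪gradient f (x + t • v), v⟫_ℝ - c =
          ⟪gradient f (x + t • v) - gradient f x, v⟫_ℝ := by
        rw [inner_sub_left]
      have hLtv : ‖gradient f (x + t • v) - gradient f x‖ * ‖v‖ ≤ L * (t * ‖v‖) * ‖v‖ :=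
        mul_le_mul_of_nonneg_right hlip (norm_nonneg v)
      have ht0 : 0 ≤ t := ht.1.le
      nlinarith [norm_nonneg v, sq_nonneg ‖v‖]
  have h01 : φ 1 ≤ φ 0 := hmono (by norm_num) (by norm_num) (by norm_num)
  simp only [hφ, one_smul, one_mul, one_pow, mul_one, zero_smul, add_zero, zero_mul,
    pow_two, mul_zero, sub_zero] at h01
  nlinarith [h01]

set_option maxHeartbeats 1000000 in
/-- inexact gradient descent on an L-smooth PL function with
`‖g - ∇f(x)‖² ≤ ε_est` and `η ≤ 1/(4L)` satisfies
`f(x⁺) - f* ≤ (1 - η/(4μ))(f(x) - f*) + (3η/4) ε_est`. -/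
theorem inexact_gd_pl_one_step
    (d : ℕ) (f : EuclideanSpace ℝ (Fin d) → ℝ) (L μ η fstar εest : ℝ)
    (hdiff : Differentiable ℝ f)
    (hL : 0 < L) (hμ : 0 < μ) (hη : 0 < η) (hεest : 0 ≤ εest)
    (hLip : ∀ x y, ‖gradient f x - gradient f y‖ ≤ L * ‖x - y‖)
    (hfstar : fstar = ⨅ x, f x)
    (hPL : ∀ x, f x - fstar ≤ μ * ‖gradient f x‖ ^ 2)
    (hηL : η ≤ 1 / (4 * L)) :
    ∀ (x g : EuclideanSpace ℝ (Fin d)), ‖g - gradient f x‖ ^ 2 ≤ εest →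
      f (x - η • g) - fstar ≤ (1 - η / (4 * μ)) * (f x - fstar) + (3 * η / 4) * εest := by
  intro x g hg
  have hdesc := descent_lemma f hdiff L hL.le hLip x (-(η • g))
  have hxv : x + -(η • g) = x - η • g := by abel
  rw [hxv] at hdesc
  set G := ‖gradient f x‖ with hG
  set D := ‖g - gradient f x‖ with hD
  have hIn : ⟪gradient f x, -(η • g)⟫_ℝ = -(η * ⟪gradient f x, g⟫_ℝ) := by
    rw [inner_neg_right, real_inner_smul_right]
  have hnv : ‖-(η • g)‖ ^ 2 = η ^ 2 * ‖g‖ ^ 2 := by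
    rw [norm_neg, norm_smul]
    rw [Real.norm_eq_abs, mul_pow, sq_abs]
  rw [hIn, hnv] at hdesc
  -- inner product lower bound
  have hinner : ⟪gradient f x, g⟫_ℝ ≥ G ^ 2 - G * D := by
    have : ⟪gradient f x, g - gradient f x⟫_ℝ ≥ -(G * D) := by
      have := real_inner_le_norm (gradient f x) (gradient f x - g)
      have h2 : ⟪gradient f x, gradient f x - g⟫_ℝ ≤ G * D := by
        calc ⟪gradient f x, gradient f x - g⟫_ℝ ≤ ‖gradient f x‖ * ‖gradient f x - g‖ :=
              real_inner_le_norm _ _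
          _ = G * D := by rw [norm_sub_rev]
      have h3 : ⟪gradient f x, g - gradient f x⟫_ℝ = -⟪gradient f x, gradient f x - g⟫_ℝ := by
        rw [← inner_neg_right]; congr 1; abel
      linarith [h3 ▸ neg_le_neg h2]
    have h4 : ⟪gradient f x, g⟫_ℝ = ⟪gradient f x, gradient f x⟫_ℝ +
        ⟪gradient f x, g - gradient f x⟫_ℝ := by
      rw [← inner_add_right]; congr 1; abel
    rw [real_inner_self_eq_norm_sq] at h4
    linarith [h4]
  -- norm of g bound
  have hgnorm : ‖g‖ ^ 2 ≤ (G + D) ^ 2 := by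
    have : ‖g‖ ≤ G + D := by
      calc ‖g‖ = ‖gradient f x + (g - gradient f x)‖ := by congr 1; abel
        _ ≤ G + D := norm_add_le _ _
    nlinarith [norm_nonneg g]
  have hLη : L * η ≤ 1 / 4 := by
    rw [le_div_iff₀ (by positivity)] at hηL
    nlinarith
  have hG0 : 0 ≤ G := norm_nonneg _
  have hD0 : 0 ≤ D := norm_nonneg _
  -- step bound: f(x - ηg) ≤ f x - η/4 G² + 3η/4 D²
  have hstep : f (x - η • g) ≤ f x - η / 4 * G ^ 2 + 3 * η / 4 * D ^ 2 := by
    nlinarith [sq_nonneg (G - D), mul_pos hη hη, sq_nonneg G, sq_nonneg D,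
      mul_le_mul_of_nonneg_right hLη (mul_pos hη hη).le,
      mul_le_mul_of_nonneg_left hgnorm (by positivity : (0:ℝ) ≤ L / 2 * η ^ 2),
      mul_le_mul_of_nonneg_left hinner hη.le]
  -- PL step
  have hPLx := hPL x
  have hdivμ : η / (4 * μ) * (f x - fstar) ≤ η / 4 * G ^ 2 := by
    have h1 : η / (4 * μ) * (f x - fstar) ≤ η / (4 * μ) * (μ * G ^ 2) :=
      mul_le_mul_of_nonneg_left hPLx (by positivity)
    have h2 : η / (4 * μ) * (μ * G ^ 2) = η / 4 * G ^ 2 := by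
      field_simp
    linarith [h1, h2 ▸ h1]
  have hDε : 3 * η / 4 * D ^ 2 ≤ 3 * η / 4 * εest :=
    mul_le_mul_of_nonneg_left hg (by positivity)
  nlinarith [hstep, hdivμ, hDε]
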